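/- Let S > 0 be real, let B = log₂(1 + 2S) + log₂(1 + S/(1+S)), and suppose real numbers R₁₁, R₁₂, R₂₁, R₂₂ satisfy R₁₁ + R₁₂ + R₂₂ ≤ B, R₂₂ + R₁₁ + R₂₁ ≤ B, R₁₁ + R₁₂ + R₂₁ ≤ B, and R₂₂ + R₂₁ + R₁₂ ≤ B. Then (R₁₁ + R₁₂ + R₂₁ + R₂₂) − [(2/3)·log₂(1 + 2S) + (2/3)·log₂(1 + (2/3)S)] ≤ 2.39. In words: for the two-user X-channel with unit-modulus channel coefficients, the gap between the sum-capacity outer bound of Lemma 1 and the sum-rate achieved by the proposed scheme is at most 2.39 bits for all SNR values S > 0. -/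

import Mathlib

/-!
Adding the four outer-bound inequalities counts every rate three times, so the sum rate is at
most `4B/3`. In `B`, the second logarithm is at most `1` because `S/(1+S) < 1`, and
`1 + 2S ≤ 3(1 + 2S/3)` bounds `log₂(1+2S)` by `log₂ 3 + log₂(1 + 2S/3)`. Hence the gap is at most
`(2/3) log₂ 3 + 4/3`, and `log₂ 3 < 1.585` gives `2.39`.
-/

open Real

lemma sum_le_of_three_term_sums_le {a b c d B : ℝ}
    (h₁ : a + b + d ≤ B) (h₂ : d + a + c ≤ B) (h₃ : a + b + c ≤ B) (h₄ : d + c + b ≤ B) :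
    a + b + c + d ≤ 4 / 3 * B := by
  linarith

lemma logb_one_add_div_one_add_le_one {S : ℝ} (hS : 0 ≤ S) :
    logb 2 (1 + S / (1 + S)) ≤ 1 := by
  have hfrac : S / (1 + S) ≤ 1 := (div_le_one (by linarith)).2 (by linarith)
  calc logb 2 (1 + S / (1 + S)) ≤ logb 2 2 :=
        logb_le_logb_of_le one_lt_two (by positivity) (by linarith)
    _ = 1 := logb_self_eq_one one_lt_two

lemma logb_one_add_two_mul_le {b S : ℝ} (hb : 1 < b) (hS : 0 < 1 + 2 * S) :
    logb b (1 + 2 * S) ≤ logb b 3 + logb b (1 + 2 / 3 * S) := by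
  have hS' : 0 < 1 + 2 / 3 * S := by linarith
  rw [← logb_mul three_ne_zero hS'.ne']
  exact logb_le_logb_of_le hb hS (by linarith)

lemma logb_two_three_lt : logb 2 3 < 1.585 := by
  rw [logb, div_lt_iff₀ (log_pos one_lt_two)]
  linarith [log_three_lt_d9, log_two_gt_d9]

lemma sum_rate_gap_le {S : ℝ} (hS : 0 < S) {R₁₁ R₁₂ R₂₁ R₂₂ : ℝ}
    (h₁ : R₁₁ + R₁₂ + R₂₂ ≤ logb 2 (1 + 2 * S) + logb 2 (1 + S / (1 + S)))
    (h₂ : R₂₂ + R₁₁ + R₂₁ ≤ logb 2 (1 + 2 * S) + logb 2 (1 + S / (1 + S)))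
    (h₃ : R₁₁ + R₁₂ + R₂₁ ≤ logb 2 (1 + 2 * S) + logb 2 (1 + S / (1 + S)))
    (h₄ : R₂₂ + R₂₁ + R₁₂ ≤ logb 2 (1 + 2 * S) + logb 2 (1 + S / (1 + S))) :
    (R₁₁ + R₁₂ + R₂₁ + R₂₂)
        - (2 / 3 * logb 2 (1 + 2 * S) + 2 / 3 * logb 2 (1 + 2 / 3 * S))
      ≤ 2 / 3 * logb 2 3 + 4 / 3 := by
  have hsum := sum_le_of_three_term_sums_le h₁ h₂ h₃ h₄
  have hsnr := logb_one_add_two_mul_le one_lt_two (by linarith : 0 < 1 + 2 * S)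
  have hsat := logb_one_add_div_one_add_le_one hS.le
  linarith

/-- Corollary 2 of the paper: for the two-user X-channel with unit-modulus channel
coefficients, if the rates satisfy the four outer-bound inequalities of Lemma 1 with
common right-hand side `B = log₂(1+2S) + log₂(1 + S/(1+S))`, then the gap between the
sum rate and the rate `(2/3)log₂(1+2S) + (2/3)log₂(1+(2/3)S)` achieved by the proposed
scheme is at most `2.39` bits, for all SNR values `S > 0`. -/
theorem xchannel_constant_gap
    (S : ℝ) (hS : 0 < S) (R₁₁ R₁₂ R₂₁ R₂₂ B : ℝ)
    (hB : B = Real.logb 2 (1 + 2 * S) + Real.logb 2 (1 + S / (1 + S)))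
    (h1 : R₁₁ + R₁₂ + R₂₂ ≤ B)
    (h2 : R₂₂ + R₁₁ + R₂₁ ≤ B)
    (h3 : R₁₁ + R₁₂ + R₂₁ ≤ B)
    (h4 : R₂₂ + R₂₁ + R₁₂ ≤ B) :
    (R₁₁ + R₁₂ + R₂₁ + R₂₂)
        - ((2 / 3) * Real.logb 2 (1 + 2 * S)
          + (2 / 3) * Real.logb 2 (1 + (2 / 3) * S)) ≤ 2.39 := by
  subst hB
  have hgap := sum_rate_gap_le hS h1 h2 h3 h4
  linarith [logb_two_three_lt]
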